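/- If M is a Hilbert C*-module with a Hilbert dual, then the extension of the inner product from M to M' is unique: any two inner products on M' extending the inner product on M (and satisfying f(m) = ⟨m̂, f⟩) coincide. -/

import Mathlib

open scoped RightActions

/-- The Hilbert C⋆-module class as it stood in Mathlib (December 2024): a right `A`-module
(action of `Aᵐᵒᵖ`) with an `A`-valued inner product, `A`-linear in the second variable. -/
class CStarModuleRight (A E : Type*) [NonUnitalSemiring A] [StarRing A]
    [Module ℂ A] [AddCommGroup E] [Module ℂ E] [PartialOrder A] [SMul Aᵐᵒᵖ E] [Norm A] [Norm E]
    extends Inner A E where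
  inner_add_right {x} {y} {z} : inner x (y + z) = inner x y + inner x z
  inner_self_nonneg {x} : 0 ≤ inner x x
  inner_self {x} : inner x x = 0 ↔ x = 0
  inner_op_smul_right {a : A} {x y : E} : inner x (y <• a) = inner x y * a
  inner_smul_right_complex {z : ℂ} {x} {y} : inner x (z • y) = z • inner x y
  star_inner x y : star (inner x y) = inner y x
  norm_eq_sqrt_norm_inner_self x : ‖x‖ = √‖inner x x‖

section Defs

variable {A : Type*} [CStarAlgebra A] [PartialOrder A] [StarOrderedRing A]
variable {E : Type*} [NormedAddCommGroup E] [NormedSpace ℂ E] [SMul Aᵐᵒᵖ E] [CStarModuleRight A E]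

/-- Membership in the dual module `M'`: a bounded `A`-antilinear functional on `E`
(the functional `f` plays the role of `m ↦ ⟨m, f⟩`). -/
def IsDualFunctional (f : E → A) : Prop :=
  (∀ x y, f (x + y) = f x + f y) ∧
  (∀ (c : ℂ) (x : E), f (c • x) = (starRingEnd ℂ) c • f x) ∧
  (∀ (x : E) (a : A), f (x <• a) = star a * f x) ∧
  ∃ C : ℝ, ∀ x, ‖f x‖ ≤ C * ‖x‖

/-- The canonical image `m̂` of `m ∈ M` in the dual module: `m̂ x = ⟨x, m⟩`. -/
def mhat (m : E) : E → A := fun x => inner A x m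

/-- The right action of `A` on dual functionals: `f·a`. -/
def dualAct (f : E → A) (a : A) : E → A := fun x => f x * a

/-- The right ideal `J_f = {a ∈ A : f·a ∈ M}`. -/
def Jf (f : E → A) : Set A := {a : A | ∃ m : E, dualAct f a = mhat m}

/-- The right ideal `J_f` is essential in `A`. -/
def JfEssential (f : E → A) : Prop := ∀ a : A, (∀ j ∈ Jf f, a * j = 0) → a = 0

/-- The norm of a functional in the dual module (operator norm). -/
noncomputable def dualNorm (f : E → A) : ℝ :=
  sInf {C : ℝ | 0 ≤ C ∧ ∀ x, ‖f x‖ ≤ C * ‖x‖}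

end Defs

section DualInner

variable {A : Type*} [CStarAlgebra A] [PartialOrder A] [StarOrderedRing A]
variable {E : Type*} [NormedAddCommGroup E] [NormedSpace ℂ E] [SMul Aᵐᵒᵖ E] [CStarModuleRight A E]

/-- `inn` is an extension of the inner product of `M` to the dual module `M'`,
making `M'` a (complete) Hilbert C*-module; this is the meaning of
"`M` is a Hilbert C*-module with a Hilbert dual".  -/
structure IsDualInner (inn : (E → A) → (E → A) → A) : Prop where
  extends_inner : ∀ m n : E, inn (mhat m) (mhat n) = inner A m n
  eval : ∀ f : E → A, IsDualFunctional f → ∀ m : E, f m = inn (mhat m) f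
  add_right : ∀ f g h : E → A, inn f (g + h) = inn f g + inn f h
  act_right : ∀ (f g : E → A) (a : A), inn f (dualAct g a) = inn f g * a
  star_inn : ∀ f g : E → A, star (inn f g) = inn g f
  nonneg : ∀ f : E → A, IsDualFunctional f → 0 ≤ inn f f
  definite : ∀ f : E → A, IsDualFunctional f → inn f f = 0 → f = 0
  complete : ∀ u : ℕ → E → A, (∀ n, IsDualFunctional (u n)) →
    (∀ ε : ℝ, 0 < ε → ∃ N, ∀ p q, N ≤ p → N ≤ q → ‖inn (u p - u q) (u p - u q)‖ < ε) →
    ∃ g : E → A, IsDualFunctional g ∧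
      Filter.Tendsto (fun n => ‖inn (u n - g) (u n - g)‖) Filter.atTop (nhds 0)

end DualInner

/-!
Cauchy–Schwarz against `m̂` shows that the norm `√‖⟨f, f⟩‖` of any positive form on `M'`
extending the evaluation pairing dominates the operator norm of `f`. For an inner product
making `M'` complete, the open mapping theorem gives the reverse bound, and conjugating by
elements of `A` upgrades these norm bounds to the order bound `⟨f, f⟩₁ ≤ c ⟨f, f⟩_B`, with `c`
independent of the positive form `B`. Applied to `B_t = (1 - t) ⟨·,·⟩₁ + t ⟨·,·⟩₂`, this shows
that positivity of `B_t` propagates from `t` to `ρ t` for a fixed `ρ > 1`, so `B_t ≥ 0` for all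
large `t`, forcing `⟨f, f⟩₁ ≤ ⟨f, f⟩₂`. Symmetry and polarization finish the proof.
-/

section RightModule

variable {A : Type*} [CStarAlgebra A] [PartialOrder A]
variable {E : Type*} [NormedAddCommGroup E] [NormedSpace ℂ E] [SMul Aᵐᵒᵖ E] [CStarModuleRight A E]

namespace CStarModuleRight

lemma inner_add_left {x y z : E} : inner A (x + y) z = inner A x z + inner A y z := by
  rw [← star_inner z (x + y), inner_add_right, star_add, star_inner, star_inner]

lemma inner_op_smul_left {a : A} {x y : E} : inner A (x <• a) y = star a * inner A x y := by
  rw [← star_inner y, inner_op_smul_right, star_mul, star_inner]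

lemma inner_smul_left_complex {z : ℂ} {x y : E} : inner A (z • x) y = star z • inner A x y := by
  rw [← star_inner y, inner_smul_right_complex, star_smul, star_inner]

variable (E) in
/-- `E` as a left Hilbert module in the sense of Mathlib's `CStarModule`: the inner product is
swapped, `a` acts by `· <• star a`, and complex scalars act through complex conjugation. -/
def Flip : Type _ := E

noncomputable instance : AddCommGroup (Flip E) := inferInstanceAs (AddCommGroup E)
noncomputable instance : Module ℂ (Flip E) := Module.compHom E (starRingEnd ℂ)
instance : Norm (Flip E) := inferInstanceAs (Norm E)
instance : SMul A (Flip E) := ⟨fun a (y : E) => (y <• star a : E)⟩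

instance : CStarModule A (Flip E) where
  inner x y := inner A (show E from y) (show E from x)
  inner_add_right := inner_add_left (A := A) (E := E)
  inner_self_nonneg := inner_self_nonneg (A := A) (E := E)
  inner_self := inner_self (A := A) (E := E)
  inner_op_smul_right {a x y} := by
    change inner A ((show E from y) <• star a) (show E from x) = _
    rw [inner_op_smul_left, star_star]
  inner_smul_right_complex {z x y} := by
    change inner A ((starRingEnd ℂ z) • (show E from y)) (show E from x) = _
    rw [inner_smul_left_complex, starRingEnd_apply, star_star]
  star_inner x y := star_inner (A := A) (show E from y) (show E from x)
  norm_eq_sqrt_norm_inner_self x := norm_eq_sqrt_norm_inner_self (A := A) (show E from x)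

variable [StarOrderedRing A]

lemma norm_inner_le (x y : E) : ‖inner A x y‖ ≤ ‖x‖ * ‖y‖ := by
  rw [mul_comm]
  exact CStarModule.norm_inner_le (A := A) (Flip E) (x := (show Flip E from y))
    (y := (show Flip E from x))

end CStarModuleRight

lemma isDualFunctional_mhat [StarOrderedRing A] (m : E) : IsDualFunctional (mhat (A := A) m) :=
  ⟨fun _ _ => CStarModuleRight.inner_add_left, fun _ _ => CStarModuleRight.inner_smul_left_complex,
    fun _ _ => CStarModuleRight.inner_op_smul_left,
    ‖m‖, fun x => (CStarModuleRight.norm_inner_le x m).trans_eq (mul_comm _ _)⟩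

end RightModule

section DualFunctional

variable {A : Type*} [CStarAlgebra A]
variable {E : Type*} [NormedAddCommGroup E] [NormedSpace ℂ E] [SMul Aᵐᵒᵖ E]

lemma IsDualFunctional.add {f g : E → A} (hf : IsDualFunctional f) (hg : IsDualFunctional g) :
    IsDualFunctional (f + g) := by
  obtain ⟨hf₁, hf₂, hf₃, C, hC⟩ := hf
  obtain ⟨hg₁, hg₂, hg₃, D, hD⟩ := hg
  refine ⟨fun x y => ?_, fun c x => ?_, fun x a => ?_, C + D, fun x => ?_⟩
  · simp only [Pi.add_apply, hf₁, hg₁]; abel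
  · simp only [Pi.add_apply, hf₂, hg₂, smul_add]
  · simp only [Pi.add_apply, hf₃, hg₃, mul_add]
  · calc ‖f x + g x‖ ≤ ‖f x‖ + ‖g x‖ := norm_add_le _ _
      _ ≤ (C + D) * ‖x‖ := by linarith [hC x, hD x]

lemma IsDualFunctional.dualAct {f : E → A} (hf : IsDualFunctional f) (a : A) :
    IsDualFunctional (dualAct f a) := by
  obtain ⟨hf₁, hf₂, hf₃, C, hC⟩ := hf
  refine ⟨fun x y => ?_, fun c x => ?_, fun x b => ?_, C * ‖a‖, fun x => ?_⟩
  · simp only [_root_.dualAct, hf₁, add_mul]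
  · simp only [_root_.dualAct, hf₂, smul_mul_assoc]
  · simp only [_root_.dualAct, hf₃, mul_assoc]
  · calc ‖f x * a‖ ≤ ‖f x‖ * ‖a‖ := norm_mul_le _ _
      _ ≤ C * ‖x‖ * ‖a‖ := mul_le_mul_of_nonneg_right (hC x) (norm_nonneg a)
      _ = C * ‖a‖ * ‖x‖ := by ring

variable (A E) in
/-- The dual module `M'`, realised inside the Banach space of bounded conjugate-linear maps. -/
def dualSubmodule : Submodule ℂ (E →L⋆[ℂ] A) where
  carrier := {T | ∀ (x : E) (a : A), T (x <• a) = star a * T x}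
  add_mem' hT hS x a := by simp only [add_apply, hT x a, hS x a, mul_add]
  zero_mem' x a := by simp
  smul_mem' c T hT x a := by simp only [smul_apply, hT x a, mul_smul_comm]

lemma isClosed_dualSubmodule : IsClosed (dualSubmodule A E : Set (E →L⋆[ℂ] A)) := by
  simp only [dualSubmodule, Submodule.coe_set_mk, AddSubmonoid.coe_set_mk,
    AddSubsemigroup.coe_set_mk, Set.ofPred_forall]
  exact isClosed_iInter fun x => isClosed_iInter fun a =>
    isClosed_eq (continuous_eval_const _) (continuous_const.mul (continuous_eval_const x))

lemma IsDualFunctional.exists_mem_dualSubmodule {f : E → A} (hf : IsDualFunctional f) :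
    ∃ T ∈ dualSubmodule A E, ⇑T = f := by
  obtain ⟨hadd, hsmul, hact, C, hC⟩ := hf
  exact ⟨LinearMap.mkContinuous ⟨⟨f, hadd⟩, hsmul⟩ C hC, hact, rfl⟩

lemma isDualFunctional_of_mem_dualSubmodule {T : E →L⋆[ℂ] A} (hT : T ∈ dualSubmodule A E) :
    IsDualFunctional ⇑T :=
  ⟨map_add T, map_smulₛₗ T, hT, ‖T‖, T.le_opNorm⟩

end DualFunctional

lemma le_mul_of_forall_two_mul_mul_le {x s q : ℝ} (hs : 0 ≤ s) (hq : 0 ≤ q)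
    (h : ∀ t : ℝ, 0 < t → 2 * t * x ≤ s * x + t ^ 2 * q) : x ≤ s * q := by
  rcases hs.eq_or_lt with rfl | hs
  · rw [zero_mul]
    by_contra! hx
    have hq1 : 0 < q + 1 := by linarith
    have := h (x / (q + 1)) (div_pos hx hq1)
    field_simp at this
    nlinarith
  · nlinarith [h s hs]

lemma nonneg_of_forall_nonneg_add_smul {M : Type*} [AddCommGroup M] [PartialOrder M]
    [Module ℝ M] [PosSMulMono ℝ M] [TopologicalSpace M] [ContinuousSMul ℝ M] [ContinuousAdd M]
    [OrderClosedTopology M] {x y : M} {u : ℕ → ℝ}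
    (hu : Filter.Tendsto u Filter.atTop Filter.atTop) (h : ∀ n, 0 ≤ x + u n • y) : 0 ≤ y := by
  have hlim : Filter.Tendsto (fun n => (u n)⁻¹ • x + y) Filter.atTop (nhds y) := by
    simpa using (tendsto_inv_atTop_zero.comp hu).smul_const x |>.add_const y
  refine ge_of_tendsto hlim ?_
  filter_upwards [hu.eventually_gt_atTop 0] with n hn
  have := smul_nonneg (inv_nonneg.mpr hn.le) (h n)
  rwa [smul_add, smul_smul, inv_mul_cancel₀ hn.ne', one_smul] at this

section CStarOrder

variable {A : Type*} [CStarAlgebra A] [PartialOrder A] [StarOrderedRing A]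

open CFC Filter Topology in
lemma le_of_forall_norm_star_mul_mul_le {p r : A} (hp : 0 ≤ p) (hr : 0 ≤ r)
    (h : ∀ a : A, ‖star a * p * a‖ ≤ ‖star a * r * a‖) : p ≤ r := by
  nontriviality A
  -- conjugating by `b = (δ + r) ^ (-1/2)` turns `p ≤ δ + r` into `‖b p b‖ ≤ 1`
  have hδ : ∀ δ : ℝ, 0 < δ → p ≤ algebraMap ℝ A δ + r := by
    intro δ hδ
    set s := algebraMap ℝ A δ + r
    have hs : IsStrictlyPositive s := (isStrictlyPositive_algebraMap hδ).add_nonneg hr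
    set b := s ^ (-(1 / 2) : ℝ)
    have hb : 0 ≤ b := rpow_nonneg
    have hbpb : ‖b * p * b‖ ≤ 1 := calc
      ‖b * p * b‖ ≤ ‖b * r * b‖ := by simpa [(IsSelfAdjoint.of_nonneg hb).star_eq] using h b
      _ ≤ ‖b * s * b‖ := CStarAlgebra.norm_le_norm_of_nonneg_of_le
          (conjugate_nonneg_of_nonneg hr hb) (conjugate_le_conjugate_of_nonneg
            (le_add_of_nonneg_left (isStrictlyPositive_algebraMap hδ).nonneg) hb)
      _ = 1 := by rw [conjugate_rpow_neg_one_half s, norm_one]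
    rw [le_iff_norm_sqrt_mul_rpow p s, ← sq_le_one_iff₀ (norm_nonneg _), sq,
      ← CStarRing.norm_star_mul_self, star_mul, (IsSelfAdjoint.of_nonneg hb).star_eq,
      (IsSelfAdjoint.of_nonneg (sqrt_nonneg p)).star_eq, mul_assoc, ← mul_assoc (sqrt p),
      sqrt_mul_sqrt_self p, ← mul_assoc]
    exact hbpb
  refine ge_of_tendsto (x := 𝓝[>] 0) ?_ (eventually_nhdsWithin_of_forall hδ)
  simpa using ((continuous_algebraMap ℝ A).tendsto 0).add_const r |>.mono_left nhdsWithin_le_nhds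

end CStarOrder

section SemiInner

variable {A : Type*} [CStarAlgebra A] [PartialOrder A]
variable {E : Type*} [NormedAddCommGroup E] [NormedSpace ℂ E] [SMul Aᵐᵒᵖ E] [CStarModuleRight A E]

structure IsDualSemiInner (B : (E → A) → (E → A) → A) : Prop where
  add_right : ∀ f g h : E → A, B f (g + h) = B f g + B f h
  act_right : ∀ (f g : E → A) (a : A), B f (dualAct g a) = B f g * a
  star_inn : ∀ f g : E → A, star (B f g) = B g f
  nonneg : ∀ f : E → A, IsDualFunctional f → 0 ≤ B f f
  eval : ∀ f : E → A, IsDualFunctional f → ∀ m : E, f m = B (mhat m) f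

lemma IsDualInner.isDualSemiInner {inn : (E → A) → (E → A) → A} (h : IsDualInner inn) :
    IsDualSemiInner inn :=
  ⟨h.add_right, h.act_right, h.star_inn, h.nonneg, h.eval⟩

namespace IsDualSemiInner

variable {B : (E → A) → (E → A) → A} (hB : IsDualSemiInner B)
include hB

lemma add_left (f g h : E → A) : B (f + g) h = B f h + B g h := by
  rw [← hB.star_inn, hB.add_right, star_add, hB.star_inn, hB.star_inn]

lemma act_left (f g : E → A) (a : A) : B (dualAct f a) g = star a * B f g := by
  rw [← hB.star_inn, hB.act_right, star_mul, hB.star_inn]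

lemma apply_add_add (f g : E → A) :
    B (f + g) (f + g) = B f f + B f g + B g f + B g g := by
  rw [hB.add_left, hB.add_right, hB.add_right, ← add_assoc]

lemma apply_dualAct_dualAct (f g : E → A) (a b : A) :
    B (dualAct f a) (dualAct g b) = star a * B f g * b := by
  rw [hB.act_right, hB.act_left]

lemma apply_zero_zero : B 0 0 = 0 := by
  simpa using hB.add_right 0 0 0

lemma norm_apply_smul_smul (f : E → A) (c : ℂ) : ‖B (c • f) (c • f)‖ = ‖c‖ ^ 2 * ‖B f f‖ := by
  have hc : c • f = dualAct f (c • 1) := funext fun x => by simp [dualAct]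
  rw [hc, hB.apply_dualAct_dualAct, star_smul, star_one, smul_mul_assoc, one_mul, mul_smul_comm,
    mul_one, smul_smul, norm_smul, norm_mul, norm_star, sq]

lemma apply_add_dualAct (f g : E → A) (a : A) : B (f + dualAct g a) (f + dualAct g a)
    = B f f + B f g * a + star a * B g f + star a * B g g * a := by
  rw [hB.apply_add_add, hB.act_right, hB.act_left, hB.apply_dualAct_dualAct]

end IsDualSemiInner

lemma IsDualSemiInner.lineMap {B₁ B₂ : (E → A) → (E → A) → A} (h₁ : IsDualSemiInner B₁)
    (h₂ : IsDualSemiInner B₂) (t : ℝ)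
    (hnonneg : ∀ f : E → A, IsDualFunctional f → 0 ≤ AffineMap.lineMap (B₁ f f) (B₂ f f) t) :
    IsDualSemiInner fun f g => AffineMap.lineMap (B₁ f g) (B₂ f g) t where
  add_right f g h := by
    simp only [AffineMap.lineMap_apply_module, h₁.add_right, h₂.add_right]; module
  act_right f g a := by
    simp only [AffineMap.lineMap_apply_module, h₁.act_right, h₂.act_right, add_mul, smul_mul_assoc]
  star_inn f g := by
    simp only [AffineMap.lineMap_apply_module, star_add, star_smul, star_trivial, h₁.star_inn,
      h₂.star_inn]
  nonneg := hnonneg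
  eval f hf m := by rw [← h₁.eval f hf, ← h₂.eval f hf, AffineMap.lineMap_same_apply]

lemma IsDualSemiInner.eq_of_apply_self_eq {B₁ B₂ : (E → A) → (E → A) → A}
    (h₁ : IsDualSemiInner B₁) (h₂ : IsDualSemiInner B₂)
    (hself : ∀ f : E → A, IsDualFunctional f → B₁ f f = B₂ f f)
    {f g : E → A} (hf : IsDualFunctional f) (hg : IsDualFunctional g) : B₁ f g = B₂ f g := by
  have hcross : ∀ a : A, B₁ f g * a + star a * B₁ g f = B₂ f g * a + star a * B₂ g f :=
    fun a => by
      have := hself _ (hf.add (hg.dualAct a))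
      rw [h₁.apply_add_dualAct, h₂.apply_add_dualAct, hself f hf, hself g hg] at this
      linear_combination (norm := module) this
  have h1 := hcross 1
  have hI := hcross (Complex.I • 1)
  simp only [mul_one, star_one, one_mul, mul_smul_comm, star_smul, Complex.star_def,
    Complex.conj_I, neg_smul, neg_mul, smul_mul_assoc] at h1 hI
  have h2 : B₁ f g - B₁ g f = B₂ f g - B₂ g f :=
    smul_right_injective A Complex.I_ne_zero (by linear_combination (norm := module) hI)
  linear_combination (norm := module) (1 / 2 : ℂ) • h1 + (1 / 2 : ℂ) • h2

section CauchySchwarz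

variable [StarOrderedRing A]

namespace IsDualSemiInner

variable {B : (E → A) → (E → A) → A} (hB : IsDualSemiInner B)
include hB

lemma apply_mhat_mhat (m : E) : B (mhat m) (mhat m) = inner A m m :=
  (hB.eval _ (isDualFunctional_mhat m) m).symm

/-- `0 ≤ B (f a - t g) (f a - t g)` for `a = B f g`, estimated in norm. -/
lemma two_mul_norm_sq_le {f g : E → A} (hf : IsDualFunctional f) (hg : IsDualFunctional g)
    {t : ℝ} (ht : 0 < t) :
    2 * t * ‖B f g‖ ^ 2 ≤ ‖B f f‖ * ‖B f g‖ ^ 2 + t ^ 2 * ‖B g g‖ := by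
  have hu := hB.nonneg _ ((hf.dualAct (B f g)).add (hg.dualAct ((-t) • 1)))
  rw [hB.apply_add_add, hB.apply_dualAct_dualAct, hB.apply_dualAct_dualAct,
    hB.apply_dualAct_dualAct, hB.apply_dualAct_dualAct, ← hB.star_inn f g] at hu
  set a := B f g
  have hle : (2 * t) • (star a * a) ≤ ‖B f f‖ • (star a * a) + t ^ 2 • B g g := calc
    (2 * t) • (star a * a) ≤ star a * B f f * a + t ^ 2 • B g g := by
      rw [← sub_nonneg]; convert hu using 1; simp only [star_smul, star_one, star_trivial,
        smul_mul_assoc, mul_smul_comm, one_mul, mul_one]; module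
    _ ≤ ‖B f f‖ • (star a * a) + t ^ 2 • B g g := by
      gcongr; exact CStarAlgebra.star_left_conjugate_le_norm_smul (hB.star_inn f f)
  calc 2 * t * ‖a‖ ^ 2 = ‖(2 * t) • (star a * a)‖ := by
        rw [norm_smul, CStarRing.norm_star_mul_self, Real.norm_of_nonneg (by positivity), sq]
    _ ≤ ‖‖B f f‖ • (star a * a) + t ^ 2 • B g g‖ := CStarAlgebra.norm_le_norm_of_nonneg_of_le
        (smul_nonneg (by positivity) (star_mul_self_nonneg a)) hle
    _ ≤ ‖B f f‖ * ‖a‖ ^ 2 + t ^ 2 * ‖B g g‖ := by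
      refine (norm_add_le _ _).trans_eq ?_
      rw [norm_smul, norm_smul, CStarRing.norm_star_mul_self, norm_norm,
        Real.norm_of_nonneg (by positivity)]
      ring

lemma norm_sq_le {f g : E → A} (hf : IsDualFunctional f) (hg : IsDualFunctional g) :
    ‖B f g‖ ^ 2 ≤ ‖B f f‖ * ‖B g g‖ :=
  le_mul_of_forall_two_mul_mul_le (norm_nonneg _) (norm_nonneg _) fun _ ht =>
    hB.two_mul_norm_sq_le hf hg ht

lemma norm_le_sqrt_mul_sqrt {f g : E → A} (hf : IsDualFunctional f) (hg : IsDualFunctional g) :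
    ‖B f g‖ ≤ √‖B f f‖ * √‖B g g‖ := by
  rw [← Real.sqrt_mul (norm_nonneg _)]
  exact Real.le_sqrt_of_sq_le (hB.norm_sq_le hf hg)

lemma norm_apply_le {f : E → A} (hf : IsDualFunctional f) (m : E) :
    ‖f m‖ ≤ √‖B f f‖ * ‖m‖ := by
  rw [hB.eval f hf m, mul_comm, CStarModuleRight.norm_eq_sqrt_norm_inner_self (A := A) m,
    ← hB.apply_mhat_mhat]
  exact hB.norm_le_sqrt_mul_sqrt (isDualFunctional_mhat m) hf

lemma opNorm_le_sqrt {T : E →L⋆[ℂ] A} (hT : T ∈ dualSubmodule A E) : ‖T‖ ≤ √‖B ⇑T ⇑T‖ :=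
  T.opNorm_le_bound (Real.sqrt_nonneg _)
    (hB.norm_apply_le (isDualFunctional_of_mem_dualSubmodule hT))

lemma sqrt_norm_add_le {f g : E → A} (hf : IsDualFunctional f) (hg : IsDualFunctional g) :
    √‖B (f + g) (f + g)‖ ≤ √‖B f f‖ + √‖B g g‖ := by
  rw [Real.sqrt_le_left (by positivity), add_sq, Real.sq_sqrt (norm_nonneg _),
    Real.sq_sqrt (norm_nonneg _), hB.apply_add_add]
  have hgf : ‖B g f‖ = ‖B f g‖ := by rw [← hB.star_inn f g, norm_star]
  have := hB.norm_le_sqrt_mul_sqrt hf hg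
  calc ‖B f f + B f g + B g f + B g g‖ ≤ ‖B f f‖ + ‖B f g‖ + ‖B g f‖ + ‖B g g‖ := norm_add₄_le
    _ ≤ _ := by linarith

end IsDualSemiInner

end CauchySchwarz

end SemiInner

section OpenMapping

variable {A : Type*} [CStarAlgebra A]
variable {E : Type*} [NormedAddCommGroup E] [NormedSpace ℂ E] [SMul Aᵐᵒᵖ E]

variable (A E) in
/-- The dual module normed by `f ↦ √‖inn f f‖` instead of the operator norm. -/
def DualWith (_inn : (E → A) → (E → A) → A) : Type _ := dualSubmodule A E

namespace DualWith

variable {inn : (E → A) → (E → A) → A}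

noncomputable instance : AddCommGroup (DualWith A E inn) :=
  inferInstanceAs (AddCommGroup (dualSubmodule A E))
noncomputable instance : Module ℂ (DualWith A E inn) :=
  inferInstanceAs (Module ℂ (dualSubmodule A E))

noncomputable def equiv : DualWith A E inn ≃ₗ[ℂ] dualSubmodule A E := LinearEquiv.refl ℂ _

noncomputable def toFun (T : DualWith A E inn) : E → A :=
  ((equiv T : dualSubmodule A E) : E →L⋆[ℂ] A)

lemma isDualFunctional_toFun (T : DualWith A E inn) : IsDualFunctional T.toFun :=
  isDualFunctional_of_mem_dualSubmodule (equiv T).2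

lemma toFun_zero : (0 : DualWith A E inn).toFun = 0 := rfl
lemma toFun_sub (T S : DualWith A E inn) : (T - S).toFun = T.toFun - S.toFun := rfl
lemma toFun_smul (c : ℂ) (T : DualWith A E inn) : (c • T).toFun = c • T.toFun := rfl

noncomputable instance : Norm (DualWith A E inn) := ⟨fun T => √‖inn T.toFun T.toFun‖⟩

lemma norm_def (T : DualWith A E inn) : ‖T‖ = √‖inn T.toFun T.toFun‖ := rfl

variable [PartialOrder A] [StarOrderedRing A] [CStarModuleRight A E] [hinn : Fact (IsDualInner inn)]

lemma normedSpaceCore : NormedSpace.Core ℂ (DualWith A E inn) where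
  norm_nonneg _ := Real.sqrt_nonneg _
  norm_eq_zero_iff T := by
    rw [norm_def, Real.sqrt_eq_zero (norm_nonneg _), norm_eq_zero]
    refine ⟨fun h => ?_, fun h => ?_⟩
    · exact equiv.injective (Subtype.ext (DFunLike.coe_injective
        (hinn.out.definite _ T.isDualFunctional_toFun h)))
    · rw [h, toFun_zero]; exact hinn.out.isDualSemiInner.apply_zero_zero
  norm_smul c T := by
    rw [norm_def, norm_def, toFun_smul, hinn.out.isDualSemiInner.norm_apply_smul_smul,
      Real.sqrt_mul (sq_nonneg _), Real.sqrt_sq (norm_nonneg _)]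
  norm_triangle T S := hinn.out.isDualSemiInner.sqrt_norm_add_le T.isDualFunctional_toFun
    S.isDualFunctional_toFun

noncomputable instance : NormedAddCommGroup (DualWith A E inn) := .ofCore normedSpaceCore
noncomputable instance : NormedSpace ℂ (DualWith A E inn) := .ofCore normedSpaceCore

instance : CompleteSpace (DualWith A E inn) := by
  refine Metric.complete_of_cauchySeq_tendsto fun u hu => ?_
  have hcauchy : ∀ ε : ℝ, 0 < ε → ∃ N, ∀ p q, N ≤ p → N ≤ q →
      ‖inn ((u p).toFun - (u q).toFun) ((u p).toFun - (u q).toFun)‖ < ε := fun ε hε => by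
    obtain ⟨N, hN⟩ := Metric.cauchySeq_iff.mp hu (√ε) (Real.sqrt_pos.mpr hε)
    refine ⟨N, fun p q hp hq => ?_⟩
    have := hN p hp q hq
    rwa [dist_eq_norm, norm_def, toFun_sub, Real.sqrt_lt_sqrt_iff (norm_nonneg _)] at this
  obtain ⟨g, hg, hlim⟩ := hinn.out.complete _ (fun n => (u n).isDualFunctional_toFun) hcauchy
  obtain ⟨T, hT, rfl⟩ := hg.exists_mem_dualSubmodule
  refine ⟨equiv.symm ⟨T, hT⟩, tendsto_iff_norm_sub_tendsto_zero.mpr ?_⟩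
  have := (Real.continuous_sqrt.tendsto 0).comp hlim
  rw [Real.sqrt_zero] at this
  exact this

end DualWith

variable [PartialOrder A] [StarOrderedRing A] [CStarModuleRight A E]

lemma IsDualInner.exists_sqrt_norm_le_mul_opNorm {inn : (E → A) → (E → A) → A}
    (h : IsDualInner inn) : ∃ K : ℝ, ∀ T ∈ dualSubmodule A E, √‖inn ⇑T ⇑T‖ ≤ K * ‖T‖ := by
  have := Fact.mk h
  let J : DualWith A E inn →L[ℂ] E →L⋆[ℂ] A :=
    LinearMap.mkContinuous (σ := RingHom.id ℂ) (E := DualWith A E inn) (F := E →L⋆[ℂ] A)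
      ((dualSubmodule A E).subtype ∘ₗ DualWith.equiv.toLinearMap) 1 fun T =>
      (h.isDualSemiInner.opNorm_le_sqrt (DualWith.equiv T).2).trans_eq (one_mul _).symm
  have hrange : Set.range J = dualSubmodule A E := by
    ext T
    exact ⟨fun ⟨S, hS⟩ => hS ▸ (DualWith.equiv S).2,
      fun hT => ⟨DualWith.equiv.symm ⟨T, hT⟩, rfl⟩⟩
  obtain ⟨K, hK⟩ := J.antilipschitz_of_injective_of_isClosed_range
    (Subtype.val_injective.comp DualWith.equiv.injective) (hrange ▸ isClosed_dualSubmodule)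
  exact ⟨K, fun T hT => hK.le_mul_norm (map_zero J) (DualWith.equiv.symm ⟨T, hT⟩)⟩

end OpenMapping

section Uniqueness

variable {A : Type*} [CStarAlgebra A] [PartialOrder A] [StarOrderedRing A]
variable {E : Type*} [NormedAddCommGroup E] [NormedSpace ℂ E] [SMul Aᵐᵒᵖ E] [CStarModuleRight A E]

lemma IsDualInner.exists_le_smul {inn : (E → A) → (E → A) → A} (h : IsDualInner inn) :
    ∃ c : ℝ, 1 < c ∧ ∀ B : (E → A) → (E → A) → A, IsDualSemiInner B →
      ∀ f : E → A, IsDualFunctional f → inn f f ≤ c • B f f := by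
  obtain ⟨K, hK⟩ := h.exists_sqrt_norm_le_mul_opNorm
  refine ⟨K ^ 2 + 2, by nlinarith [sq_nonneg K], fun B hB f hf => ?_⟩
  refine le_of_forall_norm_star_mul_mul_le (h.nonneg f hf)
    (smul_nonneg (by positivity) (hB.nonneg f hf)) fun a => ?_
  obtain ⟨T, hT, hTf⟩ := (hf.dualAct a).exists_mem_dualSubmodule
  have hinn := hK T hT
  have hB' := hB.opNorm_le_sqrt hT
  rw [hTf] at hinn hB'
  rw [mul_smul_comm, smul_mul_assoc, norm_smul, Real.norm_of_nonneg (by positivity),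
    ← h.isDualSemiInner.apply_dualAct_dualAct, ← hB.apply_dualAct_dualAct]
  have h0 : 0 ≤ K * ‖T‖ := (Real.sqrt_nonneg _).trans hinn
  calc ‖inn (dualAct f a) (dualAct f a)‖ = √‖inn (dualAct f a) (dualAct f a)‖ ^ 2 :=
        (Real.sq_sqrt (norm_nonneg _)).symm
    _ ≤ K ^ 2 * ‖T‖ ^ 2 := by rw [← mul_pow]; gcongr
    _ ≤ K ^ 2 * √‖B (dualAct f a) (dualAct f a)‖ ^ 2 := by gcongr
    _ ≤ (K ^ 2 + 2) * ‖B (dualAct f a) (dualAct f a)‖ := by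
      rw [Real.sq_sqrt (norm_nonneg _)]; gcongr; linarith

/-- If `B₁ ≤ c B` for every positive extension `B`, positivity of `lineMap B₁ B₂ t` propagates
from `t` to `ρ t` with `ρ = c / (c - 1) > 1`, so `B₁ + s (B₂ - B₁) ≥ 0` for arbitrarily
large `s`. -/
lemma IsDualSemiInner.apply_self_le_of_forall_le_smul {B₁ B₂ : (E → A) → (E → A) → A}
    (h₁ : IsDualSemiInner B₁) (h₂ : IsDualSemiInner B₂) {c : ℝ} (hc : 1 < c)
    (hdom : ∀ B : (E → A) → (E → A) → A, IsDualSemiInner B →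
      ∀ f : E → A, IsDualFunctional f → B₁ f f ≤ c • B f f)
    {f : E → A} (hf : IsDualFunctional f) : B₁ f f ≤ B₂ f f := by
  set ρ := c / (c - 1) with hρdef
  have hρ : 1 < ρ := by rw [lt_div_iff₀ (by linarith)]; linarith
  let P : ℝ → Prop := fun t =>
    ∀ g : E → A, IsDualFunctional g → 0 ≤ AffineMap.lineMap (B₁ g g) (B₂ g g) t
  have step : ∀ t, P t → P (ρ * t) := fun t ht g hg => by
    have hρt : AffineMap.lineMap (B₁ g g) (B₂ g g) (ρ * t)
        = ρ • AffineMap.lineMap (B₁ g g) (B₂ g g) t - (ρ - 1) • B₁ g g := by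
      simp only [AffineMap.lineMap_apply_module]; module
    have hρc : (ρ - 1) * c = ρ := by
      rw [hρdef]; field_simp [show c - 1 ≠ 0 by linarith]; ring
    rw [hρt, sub_nonneg]
    calc (ρ - 1) • B₁ g g ≤ (ρ - 1) • c • AffineMap.lineMap (B₁ g g) (B₂ g g) t :=
          smul_le_smul_of_nonneg_left (hdom _ (h₁.lineMap h₂ t ht) g hg) (by linarith)
      _ = ρ • AffineMap.lineMap (B₁ g g) (B₂ g g) t := by rw [smul_smul, hρc]
  have hpow : ∀ n : ℕ, P (ρ ^ n) := by
    intro n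
    induction n with
    | zero => simpa [P] using h₂.nonneg
    | succ n ih => rw [pow_succ']; exact step _ ih
  rw [← sub_nonneg]
  refine nonneg_of_forall_nonneg_add_smul (x := B₁ f f) (tendsto_pow_atTop_atTop_of_one_lt hρ)
    fun n => ?_
  simpa only [AffineMap.lineMap_apply_module', add_comm] using hpow n f hf

end Uniqueness

variable {A : Type*} [CStarAlgebra A] [PartialOrder A] [StarOrderedRing A]
variable {E : Type*} [NormedAddCommGroup E] [NormedSpace ℂ E] [SMul Aᵐᵒᵖ E] [CStarModuleRight A E]

/-- If `M` is a Hilbert C*-module with a Hilbert dual, the extension of the inner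
product from `M` to `M'` is unique: any two extensions coincide (on dual functionals). -/
theorem dualInner_unique (inn₁ inn₂ : (E → A) → (E → A) → A)
    (h₁ : IsDualInner inn₁) (h₂ : IsDualInner inn₂) :
    ∀ f g : E → A, IsDualFunctional f → IsDualFunctional g → inn₁ f g = inn₂ f g := by
  have hle : ∀ {inn inn' : (E → A) → (E → A) → A}, IsDualInner inn → IsDualInner inn' →
      ∀ f : E → A, IsDualFunctional f → inn f f ≤ inn' f f := fun h h' f hf => by
    obtain ⟨c, hc, hdom⟩ := h.exists_le_smul
    exact h.isDualSemiInner.apply_self_le_of_forall_le_smul h'.isDualSemiInner hc hdom hf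
  exact fun f g hf hg => h₁.isDualSemiInner.eq_of_apply_self_eq h₂.isDualSemiInner
    (fun f hf => le_antisymm (hle h₁ h₂ f hf) (hle h₂ h₁ f hf)) hf hg
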